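/- arXiv:1612.06669 — 4 statements merged into one kernel-verified Lean document; each statement's English description precedes it below -/
import Mathlib

section
/- For all real matrices A (m×m), B (m×k), C (t×m), D (t×k) conforming respectively to the patterns S_A, S_B, S_C, S_D, and such that A is invertible, the rank of the Schur complement D − C·A⁻¹·B is at most p, the maximal cardinality of a vertex-disjoint family of U–Y paths in the directed graph G_p. -/
/-- A real matrix `X` conforms to a sparsity pattern `S` if every nonzero
entry of `X` lies at a position of `S`. -/
def ConformsTo {α β : Type*} (X : Matrix α β ℝ) (S : Set (α × β)) : Prop :=
  ∀ i j, X i j ≠ 0 → (i, j) ∈ S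

/-- Vertices of the directed graph `G_p`: state vertices `x_1,…,x_m` (`Sum.inl`),
input vertices `u_1,…,u_k` (`Sum.inr ∘ Sum.inl`), and output vertices
`y_1,…,y_t` (`Sum.inr ∘ Sum.inr`). -/
abbrev GpVert (m k t : ℕ) := Fin m ⊕ (Fin k ⊕ Fin t)

/-- The edge relation of the directed graph `G_p` associated with the sparsity
patterns `S_A, S_B, S_C, S_D`:
`x_{m₂} → x_{m₁}` iff `(m₁, m₂) ∈ S_A`; `u_j → x_i` iff `(i, j) ∈ S_B`;
`x_i → y_ℓ` iff `(ℓ, i) ∈ S_C`; `u_j → y_ℓ` iff `(ℓ, j) ∈ S_D`. -/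
def GpEdge {m k t : ℕ} (SA : Set (Fin m × Fin m)) (SB : Set (Fin m × Fin k))
    (SC : Set (Fin t × Fin m)) (SD : Set (Fin t × Fin k)) :
    GpVert m k t → GpVert m k t → Prop
  | Sum.inl m₂, Sum.inl m₁ => (m₁, m₂) ∈ SA
  | Sum.inr (Sum.inl j), Sum.inl i => (i, j) ∈ SB
  | Sum.inl i, Sum.inr (Sum.inr l) => (l, i) ∈ SC
  | Sum.inr (Sum.inl j), Sum.inr (Sum.inr l) => (l, j) ∈ SD
  | _, _ => False

/-- A `U`–`Y` path in a directed graph with edge relation `E`: a finite sequence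
of pairwise distinct vertices whose consecutive pairs are edges, starting at an
input vertex (in `U`) and ending at an output vertex (in `Y`). -/
def IsUYPath {m k t : ℕ} (E : GpVert m k t → GpVert m k t → Prop)
    (l : List (GpVert m k t)) : Prop :=
  l.Nodup ∧ l.Chain' E ∧
    (∃ u : Fin k, l.head? = some (Sum.inr (Sum.inl u))) ∧
    (∃ y : Fin t, l.getLast? = some (Sum.inr (Sum.inr y)))

/-- `p` is the maximal cardinality of a vertex-disjoint family of `U`–`Y` paths. -/
def IsMaxDisjointUY {m k t : ℕ} (E : GpVert m k t → GpVert m k t → Prop) (p : ℕ) : Prop :=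
  IsGreatest {c : ℕ | ∃ P : Fin c → List (GpVert m k t),
    (∀ i, IsUYPath E (P i)) ∧
    (∀ i j, i ≠ j → ∀ v ∈ P i, v ∉ P j)} p

/-!
If the Schur complement `D - C A⁻¹ B` has rank `r`, it has an invertible `r × r` minor on
rows `e` and columns `f`. By the Schur determinant formula the bordered matrix
`N = [[A, B_f], [C_e, D_ef]]`, indexed by `Fin m ⊕ Fin r`, is invertible, so some permutation
`σ` has `N (σ c) c ≠ 0` for every column `c`. Reading the columns as the vertices `x_i, u_{f s}`
and the rows as `x_i, y_{e s}`, each such entry is an edge of `G_p` from `c` to `σ c`, by the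
sparsity patterns. Following `σ` from `inr s` until the orbit first returns to `Fin r` traces
a `U`–`Y` path from `u_{f s}` to some `y_{e s'}`; as `σ` is injective, these `r` paths are
vertex-disjoint, hence `r ≤ p`.
-/

section RankMinor
open Matrix Module Submodule

variable {K : Type*} [Field K]

theorem exists_injective_linearIndependent_comp {V ι : Type*} [AddCommGroup V] [Module K V]
    [Finite ι] (v : ι → V) :
    ∃ g : Fin (finrank K (span K (Set.range v))) → ι,
      Function.Injective g ∧ LinearIndependent K (v ∘ g) := by
  obtain ⟨κ, a, ha, hspan, hli⟩ := exists_linearIndependent' K v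
  have : Finite κ := Finite.of_injective a ha
  have : Fintype κ := Fintype.ofFinite κ
  have hcard : Fintype.card κ = finrank K (span K (Set.range v)) := by
    rw [← hspan, finrank_span_eq_card hli]
  let g : Fin _ ≃ κ := (Fintype.equivFinOfCardEq hcard).symm
  exact ⟨a ∘ g, ha.comp g.injective, hli.comp g g.injective⟩

theorem Matrix.exists_isUnit_submatrix_rank {m n : Type*} [Fintype m] [Fintype n]
    (A : Matrix m n K) :
    ∃ (e : Fin A.rank → m) (f : Fin A.rank → n),
      Function.Injective e ∧ Function.Injective f ∧ IsUnit (A.submatrix e f) := by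
  obtain ⟨f, hf, hcols⟩ :=
    A.rank_eq_finrank_span_cols ▸ exists_injective_linearIndependent_comp A.col
  have hrank : (A.submatrix id f).rank = A.rank := by
    rw [← rank_transpose, LinearIndependent.rank_matrix (M := (A.submatrix id f)ᵀ) hcols,
      Fintype.card_fin]
  obtain ⟨e, he, hrows⟩ := hrank ▸ (A.submatrix id f).rank_eq_finrank_span_row ▸
    exists_injective_linearIndependent_comp (A.submatrix id f).row
  exact ⟨e, f, he, hf, linearIndependent_rows_iff_isUnit.mp hrows⟩

theorem Matrix.exists_perm_forall_ne_zero_of_det_ne_zero {n R : Type*} [Fintype n]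
    [DecidableEq n] [CommRing R] {M : Matrix n n R} (h : M.det ≠ 0) :
    ∃ σ : Equiv.Perm n, ∀ i, M (σ i) i ≠ 0 := by
  contrapose! h
  refine M.det_apply ▸ Finset.sum_eq_zero fun σ _ => ?_
  obtain ⟨i, hi⟩ := h σ
  rw [Finset.prod_eq_zero (f := fun j => M (σ j) j) (Finset.mem_univ i) hi, smul_zero]

theorem Matrix.det_fromBlocks_submatrix_ne_zero {m n p r : Type*} [Fintype m] [DecidableEq m]
    [Fintype r] [DecidableEq r] [Fintype n]
    {A : Matrix m m K} {B : Matrix m n K} {C : Matrix p m K} {D : Matrix p n K}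
    (hA : IsUnit A) (e : r → p) (f : r → n)
    (hS : IsUnit ((D - C * A⁻¹ * B).submatrix e f)) :
    (fromBlocks A (B.submatrix id f) (C.submatrix e id) (D.submatrix e f)).det ≠ 0 := by
  have := hA.invertible
  have hschur : (D - C * A⁻¹ * B).submatrix e f =
      D.submatrix e f - C.submatrix e id * A⁻¹ * B.submatrix id f := by
    rw [submatrix_sub, Pi.sub_apply, Pi.sub_apply, submatrix_mul _ _ _ id _ Function.bijective_id,
      submatrix_mul _ _ _ id _ Function.bijective_id, submatrix_id_id]
  rw [det_fromBlocks₁₁, invOf_eq_nonsing_inv, ← hschur]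
  exact mul_ne_zero ((isUnit_iff_isUnit_det A).mp hA).ne_zero
    ((isUnit_iff_isUnit_det _).mp hS).ne_zero

end RankMinor

namespace Equiv.Perm

variable {α β : Type*} [Finite α] [Finite β] (σ : Perm (α ⊕ β))

theorem exists_pow_apply_inr_isRight (b : β) :
    ∃ n, 0 < n ∧ ((σ ^ n) (Sum.inr b)).isRight := by
  refine ⟨orderOf σ, orderOf_pos σ, ?_⟩
  rw [pow_orderOf_eq_one σ]
  rfl

def returnTime (b : β) : ℕ :=
  Nat.find (σ.exists_pow_apply_inr_isRight b)

theorem returnTime_pos (b : β) : 0 < σ.returnTime b :=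
  (Nat.find_spec (σ.exists_pow_apply_inr_isRight b)).1

theorem isRight_pow_returnTime_apply (b : β) :
    ((σ ^ σ.returnTime b) (Sum.inr b)).isRight :=
  (Nat.find_spec (σ.exists_pow_apply_inr_isRight b)).2

theorem isLeft_pow_apply_of_lt_returnTime {b : β} {j : ℕ} (hj : 0 < j)
    (hjb : j < σ.returnTime b) : ((σ ^ j) (Sum.inr b)).isLeft := by
  have := Nat.find_min (σ.exists_pow_apply_inr_isRight b) hjb
  simpa [hj] using this

theorem eq_of_pow_apply_inr_eq_of_le {b b' : β} {j j' : ℕ} (hj : 0 < j) (hjj' : j ≤ j')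
    (hj' : j' ≤ σ.returnTime b') (h : (σ ^ j) (Sum.inr b) = (σ ^ j') (Sum.inr b')) :
    b = b' ∧ j = j' := by
  have hback : Sum.inr b = (σ ^ (j' - j)) (Sum.inr b') := by
    refine (σ ^ j).injective (h.trans ?_)
    rw [← Perm.mul_apply, ← pow_add, Nat.add_sub_cancel' hjj']
  rcases Nat.eq_zero_or_pos (j' - j) with hzero | hpos
  · rw [hzero, pow_zero, one_apply, Sum.inr.injEq] at hback
    exact ⟨hback, by omega⟩
  · have := σ.isLeft_pow_apply_of_lt_returnTime hpos (by omega : j' - j < σ.returnTime b')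
    rw [← hback] at this
    contradiction

theorem eq_of_pow_apply_inr_eq {b b' : β} {j j' : ℕ} (hj : 0 < j) (hjb : j ≤ σ.returnTime b)
    (hj' : 0 < j') (hjb' : j' ≤ σ.returnTime b')
    (h : (σ ^ j) (Sum.inr b) = (σ ^ j') (Sum.inr b')) : b = b' ∧ j = j' := by
  rcases le_total j j' with hle | hle
  · exact σ.eq_of_pow_apply_inr_eq_of_le hj hle hjb' h
  · obtain ⟨hb, hjj⟩ := σ.eq_of_pow_apply_inr_eq_of_le hj' hle hjb h.symm
    exact ⟨hb.symm, hjj.symm⟩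

end Equiv.Perm

section Paths

variable {m k t r : ℕ}

def colVertex (f : Fin r → Fin k) : Fin m ⊕ Fin r → GpVert m k t :=
  Sum.elim Sum.inl fun s => Sum.inr (Sum.inl (f s))

def rowVertex (e : Fin r → Fin t) : Fin m ⊕ Fin r → GpVert m k t :=
  Sum.elim Sum.inl fun s => Sum.inr (Sum.inr (e s))

theorem rowVertex_injective {e : Fin r → Fin t} (he : Function.Injective e) :
    Function.Injective (rowVertex (m := m) (k := k) e) := by
  rintro (i | s) (i' | s') h <;> simp_all [rowVertex, he.eq_iff]

theorem gpEdge_of_fromBlocks_ne_zero {SA : Set (Fin m × Fin m)} {SB : Set (Fin m × Fin k)}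
    {SC : Set (Fin t × Fin m)} {SD : Set (Fin t × Fin k)}
    {A : Matrix (Fin m) (Fin m) ℝ} {B : Matrix (Fin m) (Fin k) ℝ}
    {C : Matrix (Fin t) (Fin m) ℝ} {D : Matrix (Fin t) (Fin k) ℝ}
    (hA : ConformsTo A SA) (hB : ConformsTo B SB) (hC : ConformsTo C SC) (hD : ConformsTo D SD)
    {e : Fin r → Fin t} {f : Fin r → Fin k} {row col : Fin m ⊕ Fin r}
    (h : Matrix.fromBlocks A (B.submatrix id f) (C.submatrix e id) (D.submatrix e f)
      row col ≠ 0) :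
    GpEdge SA SB SC SD (colVertex f col) (rowVertex e row) := by
  rcases row with i | s <;> rcases col with i' | s'
  · exact hA _ _ h
  · exact hB _ _ h
  · exact hC _ _ h
  · exact hD _ _ h

open Equiv

variable (e : Fin r → Fin t) (f : Fin r → Fin k) (σ : Perm (Fin m ⊕ Fin r))

def orbitVertex (s : Fin r) (j : ℕ) : GpVert m k t :=
  if j = 0 then Sum.inr (Sum.inl (f s)) else rowVertex e ((σ ^ j) (Sum.inr s))

def orbitPath (s : Fin r) : List (GpVert m k t) :=
  (List.range (σ.returnTime s + 1)).map (orbitVertex e f σ s)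

variable {e f}

theorem orbitVertex_eq_colVertex {s : Fin r} {j : ℕ} (hj : j < σ.returnTime s) :
    orbitVertex e f σ s j = colVertex f ((σ ^ j) (Sum.inr s)) := by
  rcases Nat.eq_zero_or_pos j with rfl | hpos
  · rfl
  · obtain ⟨x, hx⟩ := Sum.isLeft_iff.mp (σ.isLeft_pow_apply_of_lt_returnTime hpos hj)
    simp [orbitVertex, hpos.ne', hx, rowVertex, colVertex]

theorem eq_of_orbitVertex_eq (he : Function.Injective e) (hf : Function.Injective f)
    {s s' : Fin r} {j j' : ℕ}
    (hj : j ≤ σ.returnTime s) (hj' : j' ≤ σ.returnTime s')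
    (h : orbitVertex e f σ s j = orbitVertex e f σ s' j') : s = s' ∧ j = j' := by
  rcases Nat.eq_zero_or_pos j with rfl | hpos <;> rcases Nat.eq_zero_or_pos j' with rfl | hpos'
  · simp_all [orbitVertex, hf.eq_iff]
  · rcases hσ : (σ ^ j') (Sum.inr s') <;> simp_all [orbitVertex, rowVertex, hpos'.ne']
  · rcases hσ : (σ ^ j) (Sum.inr s) <;> simp_all [orbitVertex, rowVertex, hpos.ne']
  · simp only [orbitVertex, hpos.ne', hpos'.ne', if_false] at h
    exact σ.eq_of_pow_apply_inr_eq hpos hj hpos' hj' (rowVertex_injective he h)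

theorem mem_orbitPath {s : Fin r} {v : GpVert m k t} :
    v ∈ orbitPath e f σ s ↔ ∃ j ≤ σ.returnTime s, orbitVertex e f σ s j = v := by
  simp [orbitPath]

theorem isUYPath_orbitPath {E : GpVert m k t → GpVert m k t → Prop}
    (he : Function.Injective e) (hf : Function.Injective f)
    (hE : ∀ c, E (colVertex f c) (rowVertex e (σ c))) (s : Fin r) :
    IsUYPath E (orbitPath e f σ s) := by
  refine ⟨?nodup, ?chain, ⟨f s, ?head⟩, ?last⟩
  case nodup =>
    refine List.nodup_range.map_on fun j hj j' hj' h => ?_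
    rw [List.mem_range] at hj hj'
    exact (eq_of_orbitVertex_eq σ he hf (by omega) (by omega) h).2
  case chain =>
    refine (List.isChain_map _).mpr ((List.isChain_range_succ _ _).mpr fun j hj => ?_)
    rw [orbitVertex_eq_colVertex σ hj]
    simpa [orbitVertex, pow_succ', Perm.mul_apply] using hE ((σ ^ j) (Sum.inr s))
  case head => simp [orbitPath, List.range_succ_eq_map, orbitVertex]
  case last =>
    obtain ⟨y, hy⟩ := Sum.isRight_iff.mp (σ.isRight_pow_returnTime_apply s)
    refine ⟨e y, ?_⟩
    simp [orbitPath, List.getLast?_eq_getElem?, orbitVertex, (σ.returnTime_pos s).ne', hy,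
      rowVertex]

theorem orbitPath_disjoint (he : Function.Injective e) (hf : Function.Injective f)
    {s s' : Fin r} (hss : s ≠ s') :
    ∀ v ∈ orbitPath e f σ s, v ∉ orbitPath e f σ s' := by
  simp only [mem_orbitPath]
  rintro v ⟨j, hj, rfl⟩ ⟨j', hj', h⟩
  exact hss (eq_of_orbitVertex_eq σ he hf hj hj' h.symm).1

end Paths

theorem stmt3_general {m k t : ℕ}
    (SA : Set (Fin m × Fin m)) (SB : Set (Fin m × Fin k))
    (SC : Set (Fin t × Fin m)) (SD : Set (Fin t × Fin k))
    (p : ℕ) (hp : IsMaxDisjointUY (GpEdge SA SB SC SD) p)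
    (A : Matrix (Fin m) (Fin m) ℝ) (B : Matrix (Fin m) (Fin k) ℝ)
    (C : Matrix (Fin t) (Fin m) ℝ) (D : Matrix (Fin t) (Fin k) ℝ)
    (hA : ConformsTo A SA) (hB : ConformsTo B SB)
    (hC : ConformsTo C SC) (hD : ConformsTo D SD)
    (hAinv : IsUnit A) :
    (D - C * A⁻¹ * B).rank ≤ p := by
  obtain ⟨e, f, he, hf, hminor⟩ := (D - C * A⁻¹ * B).exists_isUnit_submatrix_rank
  obtain ⟨σ, hσ⟩ := Matrix.exists_perm_forall_ne_zero_of_det_ne_zero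
    (Matrix.det_fromBlocks_submatrix_ne_zero hAinv e f hminor)
  have hE : ∀ c, GpEdge SA SB SC SD (colVertex f c) (rowVertex e (σ c)) :=
    fun c => gpEdge_of_fromBlocks_ne_zero hA hB hC hD (hσ c)
  exact hp.2 ⟨orbitPath e f σ, isUYPath_orbitPath σ he hf hE,
    fun s s' hss => orbitPath_disjoint σ he hf hss⟩

/-- **Upper-bound half of Lemma 2** (van der Woude).  For all real matrices
`A, B, C, D` conforming to the patterns `S_A, S_B, S_C, S_D` with `A`
invertible, the rank of the Schur complement `D - C * A⁻¹ * B` is at most the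
maximal cardinality `p` of a vertex-disjoint family of `U`–`Y` paths in `G_p`. -/
theorem stmt3 {m k t : ℕ} (hm : 0 < m) (hk : 0 < k) (ht : 0 < t) (hkt : k ≤ t)
    (SA : Set (Fin m × Fin m)) (SB : Set (Fin m × Fin k))
    (SC : Set (Fin t × Fin m)) (SD : Set (Fin t × Fin k))
    (p : ℕ) (hp : IsMaxDisjointUY (GpEdge SA SB SC SD) p)
    (A : Matrix (Fin m) (Fin m) ℝ) (B : Matrix (Fin m) (Fin k) ℝ)
    (C : Matrix (Fin t) (Fin m) ℝ) (D : Matrix (Fin t) (Fin k) ℝ)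
    (hA : ConformsTo A SA) (hB : ConformsTo B SB)
    (hC : ConformsTo C SC) (hD : ConformsTo D SD)
    (hAinv : IsUnit A) :
    (D - C * A⁻¹ * B).rank ≤ p :=
  stmt3_general SA SB SC SD p hp A B C D hA hB hC hD hAinv
end

section
/- Let A be an invertible N×N real matrix and let b, g : {1,…,N} → ℝ with b(n) ≠ 0 for all n. Set B = Aᵀ · diag(b) · A and G = Aᵀ · diag(g) · A. Then for any index maps s : {1,…,a} → {1,…,N} and t : {1,…,c} → {1,…,N}, the following matrix identity holds: B.submatrix s t + (G.submatrix s id) · B⁻¹ · (G.submatrix id t) = (Aᵀ · diag(b̃) · A).submatrix s t, where b̃(n) = b(n) + g(n)²/b(n) for each n. -/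
open Matrix

/-- **Schur-complement identity** (equations (10)–(11) in the paper's proof of
Lemma 4).  Let `A` be an invertible `N × N` real matrix, `b, g : Fin N → ℝ`
with `b n ≠ 0` for all `n`, and set `B = Aᵀ * diag b * A`,
`G = Aᵀ * diag g * A`.  Then for any index maps `s, t`,
`B.submatrix s t + (G.submatrix s id) * B⁻¹ * (G.submatrix id t)
  = (Aᵀ * diag b̃ * A).submatrix s t`, where `b̃ n = b n + g n ^ 2 / b n`. -/
theorem stmt9 {N a c : ℕ} (A : Matrix (Fin N) (Fin N) ℝ) (hA : IsUnit A)
    (b g : Fin N → ℝ) (hb : ∀ n, b n ≠ 0)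
    (B G : Matrix (Fin N) (Fin N) ℝ)
    (hB : B = Aᵀ * Matrix.diagonal b * A)
    (hG : G = Aᵀ * Matrix.diagonal g * A)
    (s : Fin a → Fin N) (t : Fin c → Fin N) :
    B.submatrix s t + (G.submatrix s id) * B⁻¹ * (G.submatrix id t) =
      (Aᵀ * Matrix.diagonal (fun n => b n + g n ^ 2 / b n) * A).submatrix s t := by
  have hAd : IsUnit A.det := (Matrix.isUnit_iff_isUnit_det A).mp hA
  have hAtd : IsUnit Aᵀ.det := by rwa [Matrix.det_transpose]
  have hBinv : B⁻¹ = A⁻¹ * (Matrix.diagonal b)⁻¹ * Aᵀ⁻¹ := by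
    rw [hB, Matrix.mul_inv_rev, Matrix.mul_inv_rev, mul_assoc]
  have hinv : (Matrix.diagonal b)⁻¹ = Matrix.diagonal (fun n => (b n)⁻¹) := by
    apply Matrix.inv_eq_right_inv
    rw [Matrix.diagonal_mul_diagonal, ← Matrix.diagonal_one]
    exact congrArg Matrix.diagonal (funext fun n => mul_inv_cancel₀ (hb n))
  have key : B + G * B⁻¹ * G =
      Aᵀ * Matrix.diagonal (fun n => b n + g n ^ 2 / b n) * A := by
    rw [hBinv, hinv, hB, hG]
    have e1 : Aᵀ * diagonal g * A * (A⁻¹ * diagonal (fun n => (b n)⁻¹) * Aᵀ⁻¹) *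
        (Aᵀ * diagonal g * A) =
        Aᵀ * diagonal (fun n => g n * (b n)⁻¹ * g n) * A := by
      simp only [Matrix.mul_assoc]
      rw [Matrix.mul_nonsing_inv_cancel_left A _ hAd,
          Matrix.nonsing_inv_mul_cancel_left Aᵀ _ hAtd,
          ← Matrix.mul_assoc (diagonal _)]
      simp only [← Matrix.mul_assoc, Matrix.diagonal_mul_diagonal]
    rw [e1, ← Matrix.add_mul, ← Matrix.mul_add, Matrix.diagonal_add]
    have : (fun i => b i + g i * (b i)⁻¹ * g i) = (fun n => b n + g n ^ 2 / b n) := by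
      funext n; field_simp
    rw [this]
  calc B.submatrix s t + (G.submatrix s id) * B⁻¹ * (G.submatrix id t)
      = (B + G * B⁻¹ * G).submatrix s t := by
        simp only [Matrix.submatrix_add, Pi.add_apply]
        congr 1
    _ = _ := by rw [key]
end

section
/- Let T be a tree on the vertex set {0, 1, …, N} in which vertex 0 is a leaf, fix an arbitrary orientation of its N edges, and let A ∈ ℝ^{N×N} be its reduced incidence matrix (rows indexed by edges, columns by vertices 1,…,N, with entry +1 at the head of an edge, −1 at its tail, and 0 otherwise). Let {1,…,N} be partitioned into pairwise disjoint sets C, M, O with |M| = |O|. If there exists a family of pairwise vertex-disjoint paths of the tree induced by T on {1,…,N}, one path for each node of O, each starting at that node of O and ending at a node of M, then there exists a diagonal N×N real matrix D with all diagonal entries nonzero such that the square matrix (A_{:,C∪M})ᵀ · D · (A_{:,C∪O}) is invertible, where A_{:,S} denotes the submatrix of A consisting of the columns indexed by S. -/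
/-!
Cut every path at its first vertex of `M` and list the cut paths one after the other. Give each
`w ∈ C ∪ M` the edge to its predecessor on its path, and each `w ∈ C ∪ O` the edge to its
successor; a vertex on no path gets, in either case, the edge to its parent towards the root `0`.
Both choices select the same set `E` of edges, and ordering the vertices first by their position
along the paths, then by their depth, makes `A_{E,C∪M}` and `A_{E,C∪O}` triangular with nonzero
diagonal. So for `D` the indicator of `E` the product is, up to a permutation of columns,
`A_{E,C∪M}ᵀ A_{E,C∪O}`, which is invertible; replacing the zeros of `D` by one `ε ≠ 0` that
avoids the finitely many roots of the determinant, a polynomial in `ε`, keeps it invertible.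
-/

open Matrix

/-- Adjacency of the subgraph of `T` induced on the non-root vertices
`{1, …, N}`, identified with `Fin N` via `Fin.succ`. -/
def InducedAdj {N : ℕ} (T : SimpleGraph (Fin (N + 1))) (u v : Fin N) : Prop :=
  T.Adj u.succ v.succ

namespace List

theorem IsChain.imp_of_mem_dropLast_tail {α : Type*} {R S : α → α → Prop} {l : List α}
    (H : ∀ a ∈ l.dropLast, ∀ b ∈ l.tail, R a b → S a b) (hl : l.IsChain R) :
    l.IsChain S := by
  rw [isChain_iff_getElem] at hl ⊢
  intro i hi
  have ha : l[i] ∈ l.dropLast := by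
    rw [← getElem_dropLast (by simp; omega)]
    exact getElem_mem _
  have hb : l[i + 1] ∈ l.tail := by
    rw [← getElem_tail (by simp; omega)]
    exact getElem_mem _
  exact H _ ha _ hb (hl i hi)

theorem exists_prefix_ending_at_first {α : Type*} (p : α → Prop) [DecidablePred p]
    {l : List α} (h : ∃ x ∈ l, p x) :
    ∃ q, q <+: l ∧ q ≠ [] ∧ (∀ x ∈ q.getLast?, p x) ∧
      ∀ x ∈ q.dropLast, ¬p x := by
  obtain ⟨x, hx⟩ := Option.isSome_iff_exists.1
    ((find?_isSome (p := fun x => decide (p x))).2 (by simpa using h))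
  obtain ⟨hpx, as, bs, rfl, has⟩ := find?_eq_some_iff_append.1 hx
  exact ⟨as ++ [x], ⟨bs, by simp⟩, by simp, by simpa using hpx, by simpa using has⟩

theorem forall_mem_head?_flatten {α : Type*} {p : α → Prop} {L : List (List α)}
    (h : ∀ l ∈ L, ∀ x ∈ l.head?, p x) : ∀ x ∈ L.flatten.head?, p x := fun x hx => by
  obtain ⟨l, hl, hlx⟩ := exists_of_findSome?_eq_some (head?_flatten ▸ hx)
  exact h l hl x hlx

theorem forall_mem_getLast?_flatten {α : Type*} {p : α → Prop} {L : List (List α)}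
    (h : ∀ l ∈ L, ∀ x ∈ l.getLast?, p x) : ∀ x ∈ L.flatten.getLast?, p x :=
    fun x hx => by
  obtain ⟨l, hl, hlx⟩ := exists_of_findSome?_eq_some (getLast?_flatten ▸ hx)
  exact h l (mem_reverse.1 hl) x hlx

end List

namespace Matrix

theorem det_ne_zero_of_graded {R n α : Type*} [CommRing R] [IsDomain R] [Fintype n]
    [DecidableEq n] [LinearOrder α] (P : Matrix n n R) (height : n → α)
    (hdiag : ∀ i, P i i ≠ 0) (hlt : ∀ i j, i ≠ j → P i j ≠ 0 → height j < height i) :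
    P.det ≠ 0 := by
  have hP : P.BlockTriangular (OrderDual.toDual ∘ height) := fun i j hij => by
    by_contra hne
    rcases eq_or_ne i j with rfl | hij'
    · exact lt_irrefl _ hij
    · exact lt_asymm hij (hlt i j hij' hne)
  rw [hP.det]
  refine Finset.prod_ne_zero_iff.2 fun a _ => ?_
  have hblock : P.toSquareBlock (OrderDual.toDual ∘ height) a =
      diagonal fun i : {i // (OrderDual.toDual ∘ height) i = a} => P i i := by
    ext ⟨i, hi⟩ ⟨j, hj⟩
    rcases eq_or_ne i j with rfl | hij
    · simp [toSquareBlock_def]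
    · have hPij : P i j = 0 := by
        by_contra hne
        exact (hlt i j hij hne).ne (OrderDual.toDual.injective (hj.trans hi.symm))
      simp [toSquareBlock_def, hPij, hij]
  rw [hblock, det_diagonal]
  exact Finset.prod_ne_zero_iff.2 fun i _ => hdiag i

theorem exists_ne_zero_det_add_smul_ne_zero {K n : Type*} [Field K] [Infinite K] [Fintype n]
    [DecidableEq n] {M₀ : Matrix n n K} (M₁ : Matrix n n K) (h : M₀.det ≠ 0) :
    ∃ ε : K, ε ≠ 0 ∧ (M₀ + ε • M₁).det ≠ 0 := by
  let P : Polynomial K :=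
    (M₀.map Polynomial.C + (Polynomial.X : Polynomial K) • M₁.map Polynomial.C).det
  have hP : ∀ ε, P.eval ε = (M₀ + ε • M₁).det := by
    intro ε
    rw [← Polynomial.coe_evalRingHom, RingHom.map_det]
    congr 1
    ext i j
    simp only [map_apply, add_apply, smul_apply, smul_eq_mul, RingHom.mapMatrix_apply,
      Polynomial.coe_evalRingHom, Polynomial.eval_add, Polynomial.eval_mul, Polynomial.eval_C,
      Polynomial.eval_X]
  have hP0 : P ≠ 0 := fun h0 => h (by simpa [h0] using (hP 0).symm)
  obtain ⟨ε, hε⟩ := ((Set.finite_singleton 0).union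
    (Polynomial.finite_setOfPred_isRoot hP0)).infinite_compl.nonempty
  simp only [Set.mem_compl_iff, Set.mem_union, Set.mem_singleton_iff, Set.mem_ofPred_eq,
    Polynomial.IsRoot.def, hP, not_or] at hε
  exact ⟨ε, hε⟩

theorem injective_of_det_submatrix_ne_zero {R m n : Type*} [CommRing R] [Fintype n]
    [DecidableEq n] {X : Matrix m n R} {f : n → m} (h : (X.submatrix f id).det ≠ 0) :
    Function.Injective f :=
  fun i j hij => by_contra fun hne => h (det_zero_of_row_eq hne (by ext k; simp [hij]))

theorem transpose_mul_diagonal_indicator_mul {R m ι κ : Type*} [CommSemiring R] [Fintype m]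
    [DecidableEq m] [Fintype ι] (X : Matrix m ι R) (Y : Matrix m κ R) {f : ι → m}
    (hf : Function.Injective f) :
    Xᵀ * diagonal ((Set.range f).indicator (1 : m → R)) * Y =
      (X.submatrix f id)ᵀ * Y.submatrix f id := by
  ext i j
  have hrange : Finset.univ.filter (· ∈ Set.range f) = Finset.univ.image f := by ext; simp
  rw [Matrix.mul_apply, Matrix.mul_apply]
  simp only [mul_diagonal, transpose_apply, submatrix_apply, id, Set.indicator_apply,
    Pi.one_apply, mul_ite, mul_one, mul_zero, ite_mul, zero_mul]
  rw [← Finset.sum_filter, hrange, Finset.sum_image fun a _ b _ h => hf h]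

theorem exists_rank_transpose_mul_diagonal_mul_eq {K m ι κ : Type*} [Field K] [Infinite K]
    [Fintype m] [DecidableEq m] [Fintype ι] [DecidableEq ι] [Fintype κ] [DecidableEq κ]
    (X : Matrix m ι K) (Y : Matrix m κ K) {f : ι → m} {g : κ → m}
    (hfg : Set.range f = Set.range g) (hX : (X.submatrix f id).det ≠ 0)
    (hY : (Y.submatrix g id).det ≠ 0) :
    ∃ d : m → K, (∀ r, d r ≠ 0) ∧ (Xᵀ * diagonal d * Y).rank = Fintype.card ι := by
  have hf := injective_of_det_submatrix_ne_zero hX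
  have hg := injective_of_det_submatrix_ne_zero hY
  obtain ⟨e, he⟩ : ∃ e : ι ≃ κ, ∀ i, g (e i) = f i :=
    ⟨(Equiv.ofInjective f hf).trans ((Equiv.setCongr hfg).trans (Equiv.ofInjective g hg).symm),
      fun i => by simp [Equiv.apply_ofInjective_symm]⟩
  set d₀ : m → K := (Set.range f).indicator 1
  have h₀ : ((Xᵀ * diagonal d₀ * Y).submatrix id e).det ≠ 0 := by
    have : (Xᵀ * diagonal d₀ * Y).submatrix id e =
        (X.submatrix f id)ᵀ * (Y.submatrix g id).submatrix e e := by
      rw [transpose_mul_diagonal_indicator_mul X Y hf]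
      ext i j
      simp [Matrix.mul_apply, he]
    rw [this, det_mul, det_transpose, det_submatrix_equiv_self]
    exact mul_ne_zero hX hY
  obtain ⟨ε, hε, hdet⟩ :=
    exists_ne_zero_det_add_smul_ne_zero ((Xᵀ * diagonal (1 - d₀) * Y).submatrix id e) h₀
  refine ⟨d₀ + ε • (1 - d₀), fun r => ?_, ?_⟩
  · by_cases hr : r ∈ Set.range f <;> simp [d₀, hr, hε]
  · have hsplit : (Xᵀ * diagonal (d₀ + ε • (1 - d₀)) * Y).submatrix id e =
        (Xᵀ * diagonal d₀ * Y).submatrix id e +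
          ε • (Xᵀ * diagonal (1 - d₀) * Y).submatrix id e := by
      have : diagonal (d₀ + ε • (1 - d₀)) = diagonal d₀ + ε • diagonal (1 - d₀) := by
        rw [← diagonal_smul, diagonal_add]
        rfl
      rw [this, Matrix.mul_add, Matrix.add_mul, Matrix.mul_smul, Matrix.smul_mul, submatrix_add,
        submatrix_smul]
      rfl
    rw [← rank_submatrix _ (Equiv.refl ι) e]
    exact rank_of_isUnit _ ((isUnit_iff_isUnit_det _).2 (isUnit_iff_ne_zero.2 (hsplit ▸ hdet)))

end Matrix

theorem SimpleGraph.Connected.exists_adj_dist_lt {V : Type*} {G : SimpleGraph V}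
    (hG : G.Connected) {v r : V} (hv : v ≠ r) : ∃ x, G.Adj v x ∧ G.dist x r < G.dist v r := by
  obtain ⟨p, hp⟩ := hG.exists_walk_length_eq_dist v r
  cases p with
  | nil => exact absurd rfl hv
  | cons h q =>
    refine ⟨_, h, ?_⟩
    have := SimpleGraph.dist_le q
    simp only [SimpleGraph.Walk.length_cons] at hp
    omega

section Incidence

variable {R : Type*} [CommRing R] {N : ℕ} {hd tl : Fin N → Fin (N + 1)}
  {A : Matrix (Fin N) (Fin N) R}

theorem incidence_ne_zero_iff [Nontrivial R]
    (hA : ∀ e v, A e v = if v.succ = hd e then 1 else if v.succ = tl e then -1 else 0)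
    (e v : Fin N) : A e v ≠ 0 ↔ v.succ ∈ s(hd e, tl e) := by
  rw [hA, Sym2.mem_iff]
  split_ifs <;> simp_all

def IsDescendingNeighbourMap (T : SimpleGraph (Fin (N + 1))) (S : Finset (Fin N))
    (ν : Fin N → Fin (N + 1)) : Prop :=
  ∃ height : Fin N → ℕ,
    ∀ w ∈ S, T.Adj w.succ (ν w) ∧ ∀ j ∈ S, j.succ = ν w → height j < height w

theorem exists_det_submatrix_incidence_ne_zero [IsDomain R]
    (hA : ∀ e v, A e v = if v.succ = hd e then 1 else if v.succ = tl e then -1 else 0)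
    {T : SimpleGraph (Fin (N + 1))} (hsurj : ∀ ed ∈ T.edgeSet, ∃ e, s(hd e, tl e) = ed)
    {S : Finset (Fin N)} {ν : Fin N → Fin (N + 1)} (hν : IsDescendingNeighbourMap T S ν) :
    ∃ r : S → Fin N, (∀ w, s(hd (r w), tl (r w)) = s((w : Fin N).succ, ν w)) ∧
      (A.submatrix r (↑)).det ≠ 0 := by
  obtain ⟨height, hheight⟩ := hν
  choose r hr using fun w : S => hsurj s((w : Fin N).succ, ν w) (hheight w w.2).1
  refine ⟨r, hr, Matrix.det_ne_zero_of_graded _ (fun w : S => height w) (fun w => ?_)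
    fun w j hwj hne => ?_⟩
  · simp [incidence_ne_zero_iff hA, hr]
  · rw [Matrix.submatrix_apply, incidence_ne_zero_iff hA, hr, Sym2.mem_iff] at hne
    rcases hne with h | h
    · exact absurd (Subtype.ext (Fin.succ_injective _ h)).symm hwj
    · exact (hheight w w.2).2 j j.2 h

end Incidence

section PathListing

variable {N : ℕ} {T : SimpleGraph (Fin (N + 1))} {M O : Finset (Fin N)} {L : List (Fin N)}

def PathLink (T : SimpleGraph (Fin (N + 1))) (M O : Finset (Fin N)) (u v : Fin N) : Prop :=
  (u ∈ M ↔ v ∈ O) ∧ (u ∉ M → InducedAdj T u v)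

/-- `L` lists the vertices of vertex-disjoint paths from `O` to `M`, one path after the other:
each path starts in `O`, ends in `M`, and meets `O` and `M` nowhere else. -/
structure IsPathListing (T : SimpleGraph (Fin (N + 1))) (M O : Finset (Fin N))
    (L : List (Fin N)) : Prop where
  nodup : L.Nodup
  head_mem : ∀ x ∈ L.head?, x ∈ O
  getLast_mem : ∀ x ∈ L.getLast?, x ∈ M
  isChain : L.IsChain (PathLink T M O)
  mem_of_mem_left : ∀ o ∈ O, o ∈ L
  mem_of_mem_right : ∀ m ∈ M, m ∈ L

theorem IsPathListing.reverse (hL : IsPathListing T M O L) : IsPathListing T O M L.reverse where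
  nodup := List.nodup_reverse.2 hL.nodup
  head_mem := by simpa [List.head?_reverse] using hL.getLast_mem
  getLast_mem := by simpa [List.getLast?_reverse] using hL.head_mem
  isChain := List.isChain_reverse.2 <| hL.isChain.imp fun _ _ h =>
    ⟨h.1.symm, fun hv => T.adj_symm (h.2 (mt h.1.1 hv))⟩
  mem_of_mem_left m hm := List.mem_reverse.2 (hL.mem_of_mem_right m hm)
  mem_of_mem_right o ho := List.mem_reverse.2 (hL.mem_of_mem_left o ho)

theorem IsPathListing.prev_spec (hL : IsPathListing T M O L) {w : Fin N} (hw : w ∈ L)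
    (hwO : w ∉ O) :
    L.prev w hw ∉ M ∧ InducedAdj T (L.prev w hw) w ∧
      L.idxOf (L.prev w hw) + 1 = L.idxOf w := by
  have hhead : w ≠ L.head (List.ne_nil_of_mem hw) := fun h =>
    hwO (hL.head_mem w (by
      rw [List.head?_eq_some_head (List.ne_nil_of_mem hw)]
      exact Option.mem_some_iff.2 h.symm))
  obtain ⟨hlink, hadj⟩ : PathLink T M O (L.prev w hw) w :=
    List.isChain_pair.1 (hL.isChain.infix (List.prev_infix_of_mem_tail hw hhead))
  have hM : L.prev w hw ∉ M := fun h => hwO (hlink.1 h)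
  refine ⟨hM, hadj hM, ?_⟩
  have hpos : L.idxOf w ≠ 0 := by
    obtain ⟨a, t, rfl⟩ := List.exists_cons_of_ne_nil (List.ne_nil_of_mem hw)
    rw [List.idxOf_cons_ne (b := a) t (Ne.symm hhead)]
    exact Nat.succ_ne_zero _
  rw [List.prev_eq_getElem_idxOf_pred_of_ne_head hw hhead, hL.nodup.idxOf_getElem]
  omega

-- `List.prev` is cyclic; off `O` it is the genuine predecessor (`IsPathListing.prev_spec`).
noncomputable def backNeighbour (par : Fin N → Fin (N + 1)) (L : List (Fin N)) (w : Fin N) :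
    Fin (N + 1) :=
  if hw : w ∈ L then (L.prev w hw).succ else par w

theorem IsPathListing.isDescendingNeighbourMap_backNeighbour (hL : IsPathListing T M O L)
    {par : Fin N → Fin (N + 1)}
    (hpar : ∀ w, T.Adj w.succ (par w) ∧ T.dist (par w) 0 < T.dist w.succ 0)
    {S : Finset (Fin N)} (hS : Disjoint S O) :
    IsDescendingNeighbourMap T S (backNeighbour par L) := by
  refine ⟨fun w => if w ∈ L then L.idxOf w else L.length + T.dist w.succ 0, fun w hwS => ?_⟩
  unfold backNeighbour
  split_ifs with hw
  · obtain ⟨-, hadj, hidx⟩ := hL.prev_spec hw (Finset.disjoint_left.1 hS hwS)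
    refine ⟨T.adj_symm hadj, fun j _ hj => ?_⟩
    obtain rfl := Fin.succ_injective _ hj
    simp only [List.prev_mem, hw, if_true]
    omega
  · refine ⟨(hpar w).1, fun j _ hj => ?_⟩
    have hdist := (hpar w).2
    rw [← hj] at hdist
    simp only [hw, if_false]
    split_ifs with hjL
    · have := List.idxOf_lt_length_of_mem hjL
      omega
    · omega

theorem IsPathListing.exists_backNeighbour_reverse_eq (hL : IsPathListing T M O L)
    (par : Fin N → Fin (N + 1)) {C : Finset (Fin N)} (hCO : Disjoint C O) (hMO : Disjoint M O)
    (hcover : C ∪ M ∪ O = Finset.univ) {w : Fin N} (hw : w ∈ C ∪ M) :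
    ∃ w' ∈ C ∪ O,
      s(w.succ, backNeighbour par L w) = s(w'.succ, backNeighbour par L.reverse w') := by
  by_cases hwL : w ∈ L
  · have hwO : w ∉ O := Finset.disjoint_left.1 (Finset.disjoint_union_left.2 ⟨hCO, hMO⟩) hw
    have hprev := (hL.prev_spec hwL hwO).1
    have hprevL : L.prev w hwL ∈ L.reverse := List.mem_reverse.2 (L.prev_mem w hwL)
    refine ⟨L.prev w hwL, ?_, ?_⟩
    · have := Finset.mem_univ (L.prev w hwL)
      rw [← hcover] at this
      simp only [Finset.mem_union] at this ⊢
      tauto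
    · rw [backNeighbour, dif_pos hwL, backNeighbour, dif_pos hprevL,
        List.prev_reverse_eq_next _ hL.nodup _ (L.prev_mem w hwL), List.next_prev _ hL.nodup]
      exact Sym2.eq_swap
  · have hwC : w ∈ C := by
      rcases Finset.mem_union.1 hw with h | h
      · exact h
      · exact absurd (hL.mem_of_mem_right w h) hwL
    refine ⟨w, Finset.mem_union_left _ hwC, ?_⟩
    rw [backNeighbour, dif_neg hwL, backNeighbour, dif_neg (mt List.mem_reverse.1 hwL)]

end PathListing

section Construction

variable {N : ℕ} {T : SimpleGraph (Fin (N + 1))} {M O : Finset (Fin N)}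
  {paths : Fin N → List (Fin N)}

theorem exists_prefix_isChain_pathLink
    (hpaths : ∀ o ∈ O, (paths o).Nodup ∧ (paths o).IsChain (InducedAdj T) ∧
      (paths o).head? = some o ∧ ∃ mEnd ∈ M, (paths o).getLast? = some mEnd)
    (hdisj : ∀ o ∈ O, ∀ o' ∈ O, o ≠ o' → ∀ v ∈ paths o, v ∉ paths o')
    {o : Fin N} (ho : o ∈ O) :
    ∃ q, q <+: paths o ∧ q.head? = some o ∧ (∀ x ∈ q.getLast?, x ∈ M) ∧
      q.IsChain (PathLink T M O) := by
  obtain ⟨hnd, hchain, hhead, m, hm, hlast⟩ := hpaths o ho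
  obtain ⟨q, hq, hne, hqM, hdrop⟩ :=
    List.exists_prefix_ending_at_first (· ∈ M) ⟨m, List.mem_of_getLast? hlast, hm⟩
  have hqhead : q.head? = some o := by
    obtain ⟨t, ht⟩ := hq
    rwa [← ht, List.head?_append_of_ne_nil _ hne] at hhead
  refine ⟨q, hq, hqhead, hqM, (hchain.prefix hq).imp_of_mem_dropLast_tail
    fun a ha b hb hab => ⟨iff_of_false (hdrop a ha) ?_, fun _ => hab⟩⟩
  -- the only vertex of `O` on the path from `o` is `o` itself, at its head
  obtain ⟨t, rfl⟩ := List.head?_eq_some_iff.1 hqhead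
  have hot : o ∉ t := (List.nodup_cons.1 (hq.sublist.nodup hnd)).1
  intro hbO
  rcases eq_or_ne b o with rfl | hbo
  · exact hot hb
  · exact hdisj b hbO o ho hbo b (List.mem_of_mem_head? (hpaths b hbO).2.2.1)
      (hq.subset (List.mem_cons_of_mem o hb))

theorem exists_isPathListing (hcard : M.card = O.card)
    (hpaths : ∀ o ∈ O, (paths o).Nodup ∧ (paths o).IsChain (InducedAdj T) ∧
      (paths o).head? = some o ∧ ∃ mEnd ∈ M, (paths o).getLast? = some mEnd)
    (hdisj : ∀ o ∈ O, ∀ o' ∈ O, o ≠ o' → ∀ v ∈ paths o, v ∉ paths o') :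
    ∃ L, IsPathListing T M O L := by
  choose! q hq using fun o (ho : o ∈ O) => exists_prefix_isChain_pathLink hpaths hdisj ho
  have hne : ∀ o ∈ O, q o ≠ [] := fun o ho h => by simpa [h] using (hq o ho).2.1
  have hsub : ∀ o ∈ O, ∀ x ∈ q o, x ∈ paths o := fun o ho x hx => (hq o ho).1.subset hx
  have hmem : ∀ x, x ∈ (O.toList.map q).flatten ↔ ∃ o ∈ O, x ∈ q o := by simp
  refine ⟨(O.toList.map q).flatten, ⟨?_, ?_, ?_, ?_, ?_, ?_⟩⟩
  · refine List.nodup_flatten.2 ⟨?_, List.pairwise_map.2 ((O.nodup_toList).imp_of_mem ?_)⟩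
    · simp only [List.mem_map, Finset.mem_toList]
      rintro _ ⟨o, ho, rfl⟩
      exact (hq o ho).1.sublist.nodup (hpaths o ho).1
    · intro o o' ho ho' hoo' x hx hx'
      rw [Finset.mem_toList] at ho ho'
      exact hdisj o ho o' ho' hoo' x (hsub o ho x hx) (hsub o' ho' x hx')
  · refine List.forall_mem_head?_flatten ?_
    simp only [List.mem_map, Finset.mem_toList]
    rintro _ ⟨o, ho, rfl⟩ x hx
    rw [(hq o ho).2.1, Option.mem_some_iff] at hx
    exact hx ▸ ho
  · refine List.forall_mem_getLast?_flatten ?_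
    simp only [List.mem_map, Finset.mem_toList]
    rintro _ ⟨o, ho, rfl⟩
    exact (hq o ho).2.2.1
  · refine (List.isChain_flatten ?_).2
      ⟨?_, List.Pairwise.isChain (List.pairwise_of_forall_mem_list ?_)⟩
    · simpa using fun o ho h => hne o ho h
    · simp only [List.mem_map, Finset.mem_toList]
      rintro _ ⟨o, ho, rfl⟩
      exact (hq o ho).2.2.2
    · simp only [List.mem_map, Finset.mem_toList]
      rintro _ ⟨o, ho, rfl⟩ _ ⟨o', ho', rfl⟩ x hx y hy
      rw [(hq o' ho').2.1, Option.mem_some_iff] at hy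
      have hxM := (hq o ho).2.2.1 x hx
      exact ⟨iff_of_true hxM (hy ▸ ho'), fun h => absurd hxM h⟩
  · exact fun o ho => (hmem o).2 ⟨o, ho, List.mem_of_mem_head? ((hq o ho).2.1 ▸ rfl)⟩
  · -- the ends of the cut paths are distinct vertices of `M`, and `|M| = |O|`
    intro m hm
    obtain ⟨o, ho, rfl⟩ := Finset.surj_on_of_inj_on_of_card_le
      (fun o ho => (q o).getLast (hne o ho))
      (fun o ho => (hq o ho).2.2.1 _ (by simp [List.getLast?_eq_some_getLast (hne o ho)]))
      (fun o o' ho ho' h => by_contra fun hoo' => hdisj o ho o' ho' hoo' _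
        (hsub o ho _ (List.getLast_mem _)) (h ▸ hsub o' ho' _ (List.getLast_mem _)))
      hcard.le m hm
    exact (hmem _).2 ⟨o, ho, List.getLast_mem _⟩

end Construction

theorem stmt10_general {N : ℕ} (T : SimpleGraph (Fin (N + 1))) (hT : T.IsTree)
    (hd tl : Fin N → Fin (N + 1))
    (hinj : Function.Injective fun e => s(hd e, tl e))
    (hsurj : ∀ ed ∈ T.edgeSet, ∃ e, s(hd e, tl e) = ed)
    (A : Matrix (Fin N) (Fin N) ℝ)
    (hA : ∀ e v, A e v = if v.succ = hd e then 1 else if v.succ = tl e then -1 else 0)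
    (C M O : Finset (Fin N))
    (hCM : Disjoint C M) (hCO : Disjoint C O) (hMO : Disjoint M O)
    (hcover : C ∪ M ∪ O = Finset.univ)
    (hcard : M.card = O.card)
    (paths : Fin N → List (Fin N))
    (hpaths : ∀ o ∈ O, (paths o).Nodup ∧ (paths o).Chain' (InducedAdj T) ∧
      (paths o).head? = some o ∧ ∃ mEnd ∈ M, (paths o).getLast? = some mEnd)
    (hdisj : ∀ o ∈ O, ∀ o' ∈ O, o ≠ o' → ∀ v ∈ paths o, v ∉ paths o') :
    ∃ d : Fin N → ℝ, (∀ n, d n ≠ 0) ∧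
      ((A.submatrix id (fun x : ↥(C ∪ M) => (x : Fin N)))ᵀ * Matrix.diagonal d *
        A.submatrix id (fun x : ↥(C ∪ O) => (x : Fin N))).rank = (C ∪ M).card := by
  choose par hpar using fun w : Fin N => hT.connected.exists_adj_dist_lt (Fin.succ_ne_zero w)
  obtain ⟨L, hL⟩ := exists_isPathListing hcard hpaths hdisj
  obtain ⟨f, hf, hfdet⟩ := exists_det_submatrix_incidence_ne_zero hA hsurj
    (hL.isDescendingNeighbourMap_backNeighbour hpar (Finset.disjoint_union_left.2 ⟨hCO, hMO⟩))
  obtain ⟨g, hg, hgdet⟩ := exists_det_submatrix_incidence_ne_zero hA hsurj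
    (hL.reverse.isDescendingNeighbourMap_backNeighbour hpar
      (Finset.disjoint_union_left.2 ⟨hCM, hMO.symm⟩))
  have hrange : Set.range f = Set.range g := by
    ext e
    constructor
    · rintro ⟨w, rfl⟩
      obtain ⟨w', hw', hww'⟩ := hL.exists_backNeighbour_reverse_eq par hCO hMO hcover w.2
      exact ⟨⟨w', hw'⟩, hinj ((hg _).trans (hww'.symm.trans (hf w).symm))⟩
    · rintro ⟨w', rfl⟩
      obtain ⟨w, hw, hww'⟩ := hL.reverse.exists_backNeighbour_reverse_eq par hCM hMO.symm
        (by rw [Finset.union_right_comm]; exact hcover) w'.2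
      rw [List.reverse_reverse] at hww'
      exact ⟨⟨w, hw⟩, hinj ((hf _).trans (hww'.symm.trans (hg w').symm))⟩
  obtain ⟨d, hd0, hrank⟩ :=
    Matrix.exists_rank_transpose_mul_diagonal_mul_eq
      (A.submatrix id (fun x : ↥(C ∪ M) => (x : Fin N)))
      (A.submatrix id (fun x : ↥(C ∪ O) => (x : Fin N))) hrange hfdet hgdet
  exact ⟨d, hd0, hrank.trans (Fintype.card_coe _)⟩

/-- **Combinatorial–linear-algebraic core of Lemma 4.**  Let `T` be a tree on
`{0, 1, …, N}` whose vertex `0` is a leaf, with oriented edges enumerated by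
`Fin N` and reduced incidence matrix `A` (rows = edges, columns = vertices
`1, …, N`).  Let `{1, …, N}` be partitioned into `C`, `M`, `O` with
`|M| = |O|`.  If there is a family of pairwise vertex-disjoint paths of the
induced tree on `{1, …, N}`, one for each node of `O`, each starting at that
node and ending at a node of `M`, then there is a diagonal matrix
`D = diag d` with nonzero entries such that the square matrix
`(A_{:,C∪M})ᵀ * D * (A_{:,C∪O})` is invertible (full rank). -/
theorem stmt10 {N : ℕ} (T : SimpleGraph (Fin (N + 1))) (hT : T.IsTree)
    (hleaf : ∃! v, T.Adj 0 v)
    (hd tl : Fin N → Fin (N + 1))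
    (hadj : ∀ e, T.Adj (hd e) (tl e))
    (hinj : Function.Injective fun e => s(hd e, tl e))
    (hsurj : ∀ ed ∈ T.edgeSet, ∃ e, s(hd e, tl e) = ed)
    (A : Matrix (Fin N) (Fin N) ℝ)
    (hA : ∀ e v, A e v = if v.succ = hd e then 1 else if v.succ = tl e then -1 else 0)
    (C M O : Finset (Fin N))
    (hCM : Disjoint C M) (hCO : Disjoint C O) (hMO : Disjoint M O)
    (hcover : C ∪ M ∪ O = Finset.univ)
    (hcard : M.card = O.card)
    (paths : Fin N → List (Fin N))
    (hpaths : ∀ o ∈ O, (paths o).Nodup ∧ (paths o).Chain' (InducedAdj T) ∧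
      (paths o).head? = some o ∧ ∃ mEnd ∈ M, (paths o).getLast? = some mEnd)
    (hdisj : ∀ o ∈ O, ∀ o' ∈ O, o ≠ o' → ∀ v ∈ paths o, v ∉ paths o') :
    ∃ d : Fin N → ℝ, (∀ n, d n ≠ 0) ∧
      ((A.submatrix id (fun x : ↥(C ∪ M) => (x : Fin N)))ᵀ * Matrix.diagonal d *
        A.submatrix id (fun x : ↥(C ∪ O) => (x : Fin N))).rank = (C ∪ M).card :=
  stmt10_general T hT hd tl hinj hsurj A hA C M O hCM hCO hMO hcover hcard paths hpaths hdisj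
end

section
/- Assume Criterion 1 holds. Then the sparsity pattern S_A of the partial Jacobian J_A is generically invertible; that is, there exists an invertible (2N+1)×(2N+1) real matrix conforming to S_A. -/
open Matrix

/-- The adjacency-plus-diagonal pattern of the grid: `(n, m) ∈ P` iff `n = m`
or `{n, m}` is an edge of the tree `T`. -/
def BusP {N : ℕ} (T : SimpleGraph (Fin (N + 1))) (n m : Fin (N + 1)) : Prop :=
  n = m ∨ T.Adj n m

/-- Column indices of the (single-time) Jacobian pattern: `Sum.inl n` is the
column `r_n` (real voltage part of bus `n`, `n ∈ {0, …, N}`), and `Sum.inr j`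
is the column `i_{j+1}` (imaginary voltage part of bus `j+1`; `i_0` is omitted
since the substation angle is fixed). -/
abbrev JCol (N : ℕ) := Fin (N + 1) ⊕ Fin N

/-- The bus a column refers to. -/
def colBus {N : ℕ} : JCol N → Fin (N + 1)
  | Sum.inl n => n
  | Sum.inr j => j.succ

/-- A magnitude row for bus `n` may be nonzero only in columns `r_n` and
(if `n ≠ 0`) `i_n`. -/
def AllowedMag {N : ℕ} (n : Fin (N + 1)) (c : JCol N) : Prop :=
  colBus c = n

/-- A power row for bus `n` may be nonzero only in the columns `r_m`, `i_m`
over all `m` with `(n, m) ∈ P`. -/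
def AllowedPow {N : ℕ} (T : SimpleGraph (Fin (N + 1))) (n : Fin (N + 1))
    (c : JCol N) : Prop :=
  BusP T n (colBus c)

/-- Row indices of the pattern `S_A`: one magnitude row for each
`n ∈ {0} ∪ M`, one reactive-power row and one active-power row for each
`n ∈ C ∪ M`, and one (coupled) active-power row for each `n ∈ O`. -/
abbrev RowA {N : ℕ} (M O C : Finset (Fin (N + 1))) :=
  ({x // x ∈ insert (0 : Fin (N + 1)) M}) ⊕
    (({x // x ∈ C ∪ M}) ⊕ (({x // x ∈ C ∪ M}) ⊕ ({x // x ∈ O})))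

/-- The sparsity pattern `S_A` of the partial Jacobian `J_A`, as the predicate
telling which entries are allowed to be nonzero. -/
def AllowedA {N : ℕ} (T : SimpleGraph (Fin (N + 1))) (M O C : Finset (Fin (N + 1))) :
    RowA M O C → JCol N → Prop
  | Sum.inl n => AllowedMag n.val
  | Sum.inr (Sum.inl n) => AllowedPow T n.val
  | Sum.inr (Sum.inr (Sum.inl n)) => AllowedPow T n.val
  | Sum.inr (Sum.inr (Sum.inr n)) => AllowedPow T n.val

/-- **Criterion 1** of the paper: there exists a family of pairwise
vertex-disjoint paths of the tree induced by `T` on `{1, …, N}` (i.e., paths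
of `T` avoiding the substation `0`), one path for each node of `O`, each
starting at that node of `O` and ending at a node of `M`. -/
def Criterion1 {N : ℕ} (T : SimpleGraph (Fin (N + 1))) (M O : Finset (Fin (N + 1))) : Prop :=
  ∃ P : Fin (N + 1) → List (Fin (N + 1)),
    (∀ o ∈ O, (P o).Nodup ∧ (P o).Chain' T.Adj ∧ (0 : Fin (N + 1)) ∉ P o ∧
      (P o).head? = some o ∧ ∃ mEnd ∈ M, (P o).getLast? = some mEnd) ∧
    ∀ o ∈ O, ∀ o' ∈ O, o ≠ o' → ∀ v ∈ P o, v ∉ P o'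

/-!
A pattern containing a transversal (a bijection between rows and columns through allowed
positions) is generically invertible: its permutation matrix conforms to it.  For `S_A`,
match the magnitude row of `n ∈ {0} ∪ M` with `r_n`, the active-power row of each
`n ∈ C ∪ M ∪ O` with `i_n`, and the reactive-power row of `n ∈ C ∪ M` with `r_{p n}`, where
`p n` is the predecessor of `n` on its path from Criterion 1 (and `p n = n` off the paths).
The `|O|` disjoint paths end at distinct metered buses, so by `|M| = |O|` every metered bus
ends a path; hence `p` shifts each path back by one vertex and maps `C ∪ M` injectively into
the `r`-columns not taken by magnitude rows.
-/

namespace List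
variable {α : Type*} {l : List α} {a b c : α}

theorem IsChain.rel_of_pair_infix {R : α → α → Prop} (h : l.IsChain R) (hab : [a, b] <:+: l) :
    R a b :=
  isChain_pair.mp (h.infix hab)

theorem Nodup.pair_infix_right_unique (h : l.Nodup) (hab : [a, b] <:+: l)
    (hac : [a, c] <:+: l) : b = c := by
  induction l with
  | nil => simp at hab
  | cons x t ih =>
    rw [nodup_cons] at h
    rw [infix_cons_iff] at hab hac
    rcases hab with hab | hab <;> rcases hac with hac | hac
    · obtain ⟨s, rfl⟩ := (cons_prefix_cons.mp hab).2
      obtain ⟨s', hs'⟩ := (cons_prefix_cons.mp hac).2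
      simp only [singleton_append, cons.injEq] at hs'
      exact hs'.1.symm
    · exact absurd ((cons_prefix_cons.mp hab).1 ▸ hac.mem mem_cons_self) h.1
    · exact absurd ((cons_prefix_cons.mp hac).1 ▸ hab.mem mem_cons_self) h.1
    · exact ih h.2 hab hac

theorem exists_pair_infix_of_mem (hb : b ∈ l) (hhead : l.head? ≠ some b) :
    ∃ a, [a, b] <:+: l := by
  induction l with
  | nil => simp at hb
  | cons x t ih =>
    have hbt : b ∈ t := by simp_all [eq_comm]
    by_cases ht : t.head? = some b
    · obtain ⟨s, rfl⟩ := head?_eq_some_iff.mp ht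
      exact ⟨x, [], s, rfl⟩
    · obtain ⟨a, hab⟩ := ih hbt ht
      exact ⟨a, hab.trans (infix_cons (infix_refl t))⟩

theorem Nodup.getLast?_ne_of_pair_infix (h : l.Nodup) (hab : [a, b] <:+: l) :
    l.getLast? ≠ some a := by
  obtain ⟨s, t, rfl⟩ := hab
  intro hlast
  have hlast' : (b :: t).getLast? = some a := by simpa [getLast?_append] using hlast
  replace h : (s ++ a :: b :: t).Nodup := by simpa using h
  exact (nodup_cons.mp (h.sublist (sublist_append_right s _))).1 (mem_of_mem_getLast? hlast')

end List

structure DisjointPathFamily {V : Type*} (P : V → List V) (O : Finset V) : Prop where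
  nodup : ∀ o ∈ O, (P o).Nodup
  head?_eq : ∀ o ∈ O, (P o).head? = some o
  disjoint : ∀ o ∈ O, ∀ o' ∈ O, o ≠ o' → ∀ v ∈ P o, v ∉ P o'

section PathFamily

variable {V : Type*} {P : V → List V} {O : Finset V} {o o' u v v' : V}

def PathArc (P : V → List V) (O : Finset V) (u v : V) : Prop :=
  ∃ o ∈ O, [u, v] <:+: P o

open Classical in
noncomputable def pathPred (P : V → List V) (O : Finset V) (v : V) : V :=
  if h : ∃ u, PathArc P O u v then h.choose else v

theorem pathArc_pathPred (h : ∃ u, PathArc P O u v) : PathArc P O (pathPred P O v) v := by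
  rw [pathPred, dif_pos h]
  exact h.choose_spec

theorem pathPred_of_not_exists (h : ¬∃ u, PathArc P O u v) : pathPred P O v = v := by
  rw [pathPred, dif_neg h]

theorem pathPred_eq_or_rel {R : V → V → Prop} (hchain : ∀ o ∈ O, (P o).IsChain R) (v : V) :
    pathPred P O v = v ∨ R (pathPred P O v) v := by
  by_cases h : ∃ u, PathArc P O u v
  · obtain ⟨o, ho, hinfix⟩ := pathArc_pathPred h
    exact Or.inr ((hchain o ho).rel_of_pair_infix hinfix)
  · exact Or.inl (pathPred_of_not_exists h)

theorem pathPred_ne {z : V} (hz : ∀ o ∈ O, z ∉ P o) (hv : v ≠ z) :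
    pathPred P O v ≠ z := by
  by_cases h : ∃ u, PathArc P O u v
  · obtain ⟨o, ho, hinfix⟩ := pathArc_pathPred h
    exact fun hz' => hz o ho (hz' ▸ hinfix.mem (by simp))
  · rwa [pathPred_of_not_exists h]

namespace DisjointPathFamily

theorem eq_of_mem_of_mem (hP : DisjointPathFamily P O) (ho : o ∈ O) (ho' : o' ∈ O)
    (hv : v ∈ P o) (hv' : v ∈ P o') : o = o' := by
  by_contra hne
  exact hP.disjoint o ho o' ho' hne v hv hv'

theorem pathArc_right_unique (hP : DisjointPathFamily P O) (hv : PathArc P O u v)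
    (hv' : PathArc P O u v') : v = v' := by
  obtain ⟨o, ho, h⟩ := hv
  obtain ⟨o', ho', h'⟩ := hv'
  obtain rfl :=
    hP.eq_of_mem_of_mem ho ho' (h.mem (by simp : u ∈ [u, v])) (h'.mem (by simp : u ∈ [u, v']))
  exact (hP.nodup o ho).pair_infix_right_unique h h'

theorem exists_pathArc_of_mem (hP : DisjointPathFamily P O) (ho : o ∈ O) (hv : v ∈ P o)
    (hvO : v ∉ O) : ∃ u, PathArc P O u v := by
  have hhead : (P o).head? ≠ some v := by
    rw [hP.head?_eq o ho]
    rintro ⟨⟩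
    exact hvO ho
  obtain ⟨u, hu⟩ := List.exists_pair_infix_of_mem hv hhead
  exact ⟨u, o, ho, hu⟩

theorem injOn_pathPred (hP : DisjointPathFamily P O) : Set.InjOn (pathPred P O) (↑O)ᶜ := by
  have key : ∀ v w, v ∉ O → w ∉ O → (∃ u, PathArc P O u v) →
      pathPred P O v = pathPred P O w → v = w := by
    intro v w hv hw hpv hvw
    by_cases hpw : ∃ u, PathArc P O u w
    · exact hP.pathArc_right_unique (pathArc_pathPred hpv) (hvw ▸ pathArc_pathPred hpw)
    · rw [pathPred_of_not_exists hpw] at hvw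
      obtain ⟨o, ho, h⟩ := hvw ▸ pathArc_pathPred hpv
      exact absurd (hP.exists_pathArc_of_mem ho (h.mem (by simp)) hw) hpw
  intro v hv w hw hvw
  by_cases hpv : ∃ u, PathArc P O u v
  · exact key v w hv hw hpv hvw
  by_cases hpw : ∃ u, PathArc P O u w
  · exact (key w v hw hv hpw hvw.symm).symm
  rwa [pathPred_of_not_exists hpv, pathPred_of_not_exists hpw] at hvw

theorem exists_getLast?_eq_of_card_le (hP : DisjointPathFamily P O) {M : Finset V}
    (hend : ∀ o ∈ O, ∃ m ∈ M, (P o).getLast? = some m) (hcard : M.card ≤ O.card) :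
    ∀ m ∈ M, ∃ o ∈ O, (P o).getLast? = some m := by
  choose last hlastM hlast using hend
  have hinj : ∀ o₁ o₂ h₁ h₂, last o₁ h₁ = last o₂ h₂ → o₁ = o₂ := fun o₁ o₂ h₁ h₂ heq =>
    hP.eq_of_mem_of_mem h₁ h₂ (List.mem_of_mem_getLast? (hlast o₁ h₁))
      (heq ▸ List.mem_of_mem_getLast? (hlast o₂ h₂))
  intro m hm
  obtain ⟨o, ho, rfl⟩ := Finset.surj_on_of_inj_on_of_card_le last hlastM hinj hcard m hm
  exact ⟨o, ho, hlast o ho⟩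

theorem pathPred_notMem (hP : DisjointPathFamily P O) {M : Finset V}
    (hM : ∀ m ∈ M, ∃ o ∈ O, (P o).getLast? = some m) (hv : v ∉ O) :
    pathPred P O v ∉ M := by
  intro hmem
  obtain ⟨o, ho, hlast⟩ := hM _ hmem
  by_cases h : ∃ u, PathArc P O u v
  · obtain ⟨o', ho', hinfix⟩ := pathArc_pathPred h
    obtain rfl :=
      hP.eq_of_mem_of_mem ho ho' (List.mem_of_mem_getLast? hlast) (hinfix.mem (by simp))
    exact (hP.nodup o ho).getLast?_ne_of_pair_infix hinfix hlast
  · rw [pathPred_of_not_exists h] at hlast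
    exact h (hP.exists_pathArc_of_mem ho (List.mem_of_mem_getLast? hlast) hv)

end DisjointPathFamily

end PathFamily

theorem exists_conforming_invertible_of_equiv {R C α : Type*} [Fintype R] [Fintype C]
    [DecidableEq R] [DecidableEq C] [NonAssocSemiring α] {S : R → C → Prop} (σ : R ≃ C)
    (hσ : ∀ r, S r (σ r)) :
    ∃ X : Matrix R C α, (∀ r c, X r c ≠ 0 → S r c) ∧
      ∃ Y : Matrix C R α, X * Y = 1 ∧ Y * X = 1 := by
  refine ⟨σ.toPEquiv.toMatrix, fun r c hrc => ?_, σ.symm.toPEquiv.toMatrix, ?_, ?_⟩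
  · obtain rfl : σ r = c := by
      by_contra hne
      exact hrc (by simp [PEquiv.toMatrix_apply, hne])
    exact hσ r
  · rw [← PEquiv.toMatrix_trans, ← Equiv.toPEquiv_trans, Equiv.self_trans_symm,
      Equiv.toPEquiv_refl, PEquiv.toMatrix_refl]
  · rw [← PEquiv.toMatrix_trans, ← Equiv.toPEquiv_trans, Equiv.symm_trans_self,
      Equiv.toPEquiv_refl, PEquiv.toMatrix_refl]

section PatternA

variable {N : ℕ} {M O C : Finset (Fin (N + 1))}

theorem ne_zero_of_mem_cover (hcover : M ∪ O ∪ C = Finset.univ \ {0}) {n : Fin (N + 1)}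
    (hn : n ∈ M ∪ O ∪ C) : n ≠ 0 := by
  simpa [hcover] using hn

theorem card_rowA_eq_card_jCol (hMO : Disjoint M O) (hMC : Disjoint M C) (hOC : Disjoint O C)
    (hcover : M ∪ O ∪ C = Finset.univ \ {0}) (hcard : M.card = O.card) :
    Fintype.card (RowA M O C) = Fintype.card (JCol N) := by
  have h0M : (0 : Fin (N + 1)) ∉ M := fun h => ne_zero_of_mem_cover hcover (by simp [h]) rfl
  have hN : M.card + O.card + C.card = N := by
    have := congrArg Finset.card hcover
    rwa [Finset.card_union_of_disjoint (Finset.disjoint_union_left.mpr ⟨hMC, hOC⟩),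
      Finset.card_union_of_disjoint hMO, Finset.card_sdiff_of_subset (Finset.subset_univ _),
      Finset.card_univ, Fintype.card_fin, Finset.card_singleton, Nat.add_sub_cancel] at this
  simp only [RowA, JCol, Fintype.card_sum, Fintype.card_coe, Fintype.card_fin,
    Finset.card_insert_of_notMem h0M, Finset.card_union_of_disjoint hMC.symm]
  omega

theorem exists_equiv_allowedA (T : SimpleGraph (Fin (N + 1)))
    (hMO : Disjoint M O) (hMC : Disjoint M C) (hOC : Disjoint O C)
    (hcover : M ∪ O ∪ C = Finset.univ \ {0}) (hcard : M.card = O.card)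
    (f : Fin (N + 1) → Fin (N + 1)) (hf_inj : Set.InjOn f ↑(C ∪ M))
    (hf_mem : ∀ n ∈ C ∪ M, f n ∉ insert 0 M) (hf_bus : ∀ n ∈ C ∪ M, BusP T n (f n)) :
    ∃ σ : RowA M O C ≃ JCol N, ∀ r, AllowedA T M O C r (σ r) := by
  let bus : {x // x ∈ C ∪ M} ⊕ {x // x ∈ O} → Fin (N + 1) :=
    Sum.elim Subtype.val Subtype.val
  have hbus : ∀ x, bus x ≠ 0 := by
    rintro (⟨n, hn⟩ | ⟨n, hn⟩) <;> exact ne_zero_of_mem_cover hcover (by grind)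
  have hbus_inj : Function.Injective bus :=
    Subtype.val_injective.sumElim Subtype.val_injective fun x y h =>
      Finset.disjoint_left.mp (Finset.disjoint_union_left.mpr ⟨hOC.symm, hMO⟩) (h ▸ x.2) y.2
  -- Rows regrouped as (magnitude ⊕ reactive) ⊕ (active on `C ∪ M` ⊕ active on `O`) go to
  -- the `r`-columns and to the `i`-columns respectively.
  let σ : RowA M O C → JCol N :=
    Sum.map (Sum.elim Subtype.val fun n : {x // x ∈ C ∪ M} => f n)
      (fun x => (bus x).pred (hbus x)) ∘ ⇑(Equiv.sumAssoc _ _ _).symm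
  have hσ : Function.Injective σ := by
    refine (Function.Injective.sumMap ?_ fun x y h => hbus_inj (Fin.pred_inj.mp h)).comp
      (Equiv.injective _)
    refine Subtype.val_injective.sumElim (fun x y h => Subtype.ext (hf_inj x.2 y.2 h)) ?_
    rintro ⟨m, hm⟩ ⟨n, hn⟩ h
    exact hf_mem n hn (h ▸ hm)
  refine ⟨Equiv.ofBijective σ ((Fintype.bijective_iff_injective_and_card σ).mpr
    ⟨hσ, card_rowA_eq_card_jCol hMO hMC hOC hcover hcard⟩), ?_⟩
  rintro (⟨n, hn⟩ | ⟨n, hn⟩ | ⟨n, hn⟩ | ⟨n, hn⟩)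
  · rfl
  · exact hf_bus n hn
  · exact Or.inl (Fin.succ_pred _ (hbus (.inl ⟨n, hn⟩))).symm
  · exact Or.inl (Fin.succ_pred _ (hbus (.inr ⟨n, hn⟩))).symm

end PatternA

theorem stmt11_general {N : ℕ} (T : SimpleGraph (Fin (N + 1)))
    (M O C : Finset (Fin (N + 1)))
    (hMO : Disjoint M O) (hMC : Disjoint M C) (hOC : Disjoint O C)
    (hcover : M ∪ O ∪ C = Finset.univ \ {0})
    (hcard : M.card = O.card)
    (hcrit : Criterion1 T M O) :
    ∃ X : Matrix (RowA M O C) (JCol N) ℝ,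
      (∀ r c, X r c ≠ 0 → AllowedA T M O C r c) ∧
      ∃ Y : Matrix (JCol N) (RowA M O C) ℝ, X * Y = 1 ∧ Y * X = 1 := by
  obtain ⟨P, hpath, hdisj⟩ := hcrit
  have hP : DisjointPathFamily P O :=
    ⟨fun o ho => (hpath o ho).1, fun o ho => (hpath o ho).2.2.2.1, hdisj⟩
  have hchain : ∀ o ∈ O, (P o).IsChain T.Adj := fun o ho => (hpath o ho).2.1
  have h0 : ∀ o ∈ O, 0 ∉ P o := fun o ho => (hpath o ho).2.2.1
  have hMend := hP.exists_getLast?_eq_of_card_le (fun o ho => (hpath o ho).2.2.2.2) hcard.le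
  have hCM_ne : ∀ n ∈ C ∪ M, n ≠ 0 := fun n hn => ne_zero_of_mem_cover hcover (by grind)
  have hCM_O : ∀ n ∈ C ∪ M, n ∉ O := fun n hn =>
    Finset.disjoint_left.mp (Finset.disjoint_union_left.mpr ⟨hOC.symm, hMO⟩) hn
  obtain ⟨σ, hσ⟩ := exists_equiv_allowedA T hMO hMC hOC hcover hcard (pathPred P O)
    (hP.injOn_pathPred.mono hCM_O)
    (fun n hn => Finset.mem_insert.not.mpr <| not_or.mpr
      ⟨pathPred_ne h0 (hCM_ne n hn), hP.pathPred_notMem hMend (hCM_O n hn)⟩)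
    (fun n _ => (pathPred_eq_or_rel hchain n).imp Eq.symm SimpleGraph.Adj.symm)
  exact exists_conforming_invertible_of_equiv σ hσ

/-- **Lemma 4 of the paper.**  Let `T` be a tree on `{0, 1, …, N}` whose
substation vertex `0` is a leaf, and let `{1, …, N}` be partitioned into
metered buses `M`, non-metered buses `O`, and conventional buses `C`, with
`|M| = |O|`.  If Criterion 1 holds, then the `(2N+1) × (2N+1)` sparsity
pattern `S_A` of the partial Jacobian `J_A` is generically invertible: some
real matrix conforming to `S_A` has a two-sided inverse. -/
theorem stmt11 {N : ℕ} (T : SimpleGraph (Fin (N + 1))) (hT : T.IsTree)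
    (hleaf : ∃! v, T.Adj 0 v)
    (M O C : Finset (Fin (N + 1)))
    (hMO : Disjoint M O) (hMC : Disjoint M C) (hOC : Disjoint O C)
    (hcover : M ∪ O ∪ C = Finset.univ \ {0})
    (hcard : M.card = O.card)
    (hcrit : Criterion1 T M O) :
    ∃ X : Matrix (RowA M O C) (JCol N) ℝ,
      (∀ r c, X r c ≠ 0 → AllowedA T M O C r c) ∧
      ∃ Y : Matrix (JCol N) (RowA M O C) ℝ, X * Y = 1 ∧ Y * X = 1 :=
  stmt11_general T M O C hMO hMC hOC hcover hcard hcrit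
end
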